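/- arXiv:1906.01581 — 6 statements merged into one kernel-verified Lean document; each statement's English description precedes it below -/
import Mathlib

section
/- For all positive integers a, b, c, d with d ≥ 2 and (c,d) ∉ {(1,2), (1,3), (2,2)}, exp( ln( (a·(c+d)) / ((c+1)·(a+b)) ) − 1.96·√(1/a − 1/(a+b) + 1/(c+1) − 1/(c+d)) ) < exp( ln( (a·(c+d)) / (c·(a+b)) ) − 1.96·√(1/a − 1/(a+b) + 1/c − 1/(c+d)) ). (Anti-monotonicity of the 95% lower confidence interval of the growth rate when one negative tid is added, replacing c by c+1, with c+d fixed.) -/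
/-!
Write `T = 1/a - 1/(a+b) > 0`, `X = 1/c - 1/(c+d)` and `Y = 1/(c+1) - 1/(c+d)`. After taking
logarithms the claim reads `1.96 (√(T + X) - √(T + Y)) < log ((c+1)/c)`. By concavity of `√`, adding
the same positive amount to both arguments strictly shrinks `√X - √Y`; as `X - Y` does not depend
on `d`, raising `d` is such a shift too. So it suffices to bound `1.96 (√X - √Y)` at the smallest
admissible `d` for each `c` (`d = 4` for `c = 1`, `d = 3` for `c = 2`, `d = 2` for `c ≥ 3`), which
follows from explicit bounds on the two roots and `log ((c+1)/c) ≥ 2/(2c+1)`, the first term of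
the series of `log (1 + 1/c)` (for `c = 1`, from `log 2 > 0.6931`).
-/

open Real

lemma sqrt_sub_sqrt_eq_div {x y : ℝ} (hx : 0 < x) (hy : 0 ≤ y) :
    √x - √y = (x - y) / (√x + √y) := by
  rw [eq_div_iff (by positivity)]
  linear_combination sq_sqrt hx.le - sq_sqrt hy

lemma sqrt_add_sub_sqrt_add_lt {x y e : ℝ} (hy : 0 ≤ y) (hxy : y < x) (he : 0 < e) :
    √(x + e) - √(y + e) < √x - √y := by
  have hx : 0 < x := hy.trans_lt hxy
  rw [sqrt_sub_sqrt_eq_div (by positivity) (by positivity), sqrt_sub_sqrt_eq_div hx hy,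
    add_sub_add_right_eq_sub]
  refine div_lt_div_of_pos_left (sub_pos.2 hxy) (by positivity) ?_
  exact add_lt_add_of_lt_of_le (sqrt_lt_sqrt hx.le (by linarith)) (sqrt_le_sqrt (by linarith))

lemma sqrt_sub_sqrt_le {x y l m : ℝ} (hl : 0 ≤ l) (hm : 0 ≤ m) (hy : l ^ 2 ≤ y)
    (hx : x ≤ (l + m) ^ 2) : √x - √y ≤ m := by
  have hx' : √x ≤ l + m := sqrt_le_iff.2 ⟨by positivity, hx⟩
  have hy' : l ≤ √y := (le_abs_self l).trans (abs_le_sqrt hy)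
  linarith

lemma two_div_le_log_add_one_div {c : ℝ} (hc : 0 < c) : 2 / (2 * c + 1) ≤ log ((c + 1) / c) := by
  have h := le_hasSum (hasSum_log_one_add_inv hc) 0 fun k _ ↦ by positivity
  rw [add_div, div_self hc.ne', one_div c]
  simpa [div_eq_mul_inv] using h

lemma gap_le_log_of_three_le {c : ℝ} (hc : 3 ≤ c) :
    1.96 * (√(1 / c - 1 / (c + 2)) - √(1 / (c + 1) - 1 / (c + 2))) ≤ log ((c + 1) / c) := by
  have hc0 : 0 < c := by linarith
  -- `2/(2c+3) ≤ √Y` by AM-GM, and `1.96 * 50/49 = 2` matches the bound `2/(2c+1)` on the log.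
  have hgap : √(1 / c - 1 / (c + 2)) - √(1 / (c + 1) - 1 / (c + 2)) ≤ 50 / (49 * (2 * c + 1)) := by
    refine sqrt_sub_sqrt_le (l := 2 / (2 * c + 3)) (by positivity) (by positivity) ?_ ?_
    · rw [div_pow, div_sub_div _ _ (by positivity) (by positivity),
        div_le_div_iff₀ (by positivity) (by positivity)]
      nlinarith
    · rw [div_add_div _ _ (by positivity) (by positivity), div_pow,
        div_sub_div _ _ (by positivity) (by positivity),
        div_le_div_iff₀ (by positivity) (by positivity)]
      nlinarith [mul_pos hc0 hc0, mul_pos (mul_pos hc0 hc0) hc0]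
  calc 1.96 * (√(1 / c - 1 / (c + 2)) - √(1 / (c + 1) - 1 / (c + 2)))
      ≤ 1.96 * (50 / (49 * (2 * c + 1))) := by gcongr
    _ = 2 / (2 * c + 1) := by field_simp; norm_num
    _ ≤ log ((c + 1) / c) := two_div_le_log_add_one_div hc0

lemma exists_le_gap_le_log (c d : ℕ) (hc : 0 < c) (hd : 2 ≤ d)
    (hexc : ¬((c = 1 ∧ d = 2) ∨ (c = 1 ∧ d = 3) ∨ (c = 2 ∧ d = 2))) :
    ∃ d₀ : ℕ, 0 < d₀ ∧ d₀ ≤ d ∧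
      1.96 * (√(1 / (c : ℝ) - 1 / ((c : ℝ) + d₀)) - √(1 / ((c : ℝ) + 1) - 1 / ((c : ℝ) + d₀)))
        ≤ log (((c : ℝ) + 1) / c) := by
  obtain rfl | rfl | hc3 : c = 1 ∨ c = 2 ∨ 3 ≤ c := by omega
  · refine ⟨4, by norm_num, by omega, ?_⟩
    have hgap : √(1 / (1 : ℝ) - 1 / (1 + 4)) - √(1 / ((1 : ℝ) + 1) - 1 / (1 + 4)) ≤ 0.3536 :=
      sqrt_sub_sqrt_le (l := 0.545) (by norm_num) (by norm_num) (by norm_num) (by norm_num)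
    norm_num at hgap ⊢
    linarith [log_two_gt_d9]
  · refine ⟨3, by norm_num, by omega, ?_⟩
    have hgap : √(1 / (2 : ℝ) - 1 / (2 + 3)) - √(1 / ((2 : ℝ) + 1) - 1 / (2 + 3)) ≤ 10 / 49 :=
      sqrt_sub_sqrt_le (l := 7 / 20) (by norm_num) (by norm_num) (by norm_num) (by norm_num)
    have hlog := two_div_le_log_add_one_div (c := 2) (by norm_num)
    push_cast
    linarith
  · refine ⟨2, by norm_num, hd, ?_⟩
    push_cast
    exact gap_le_log_of_three_le (by exact_mod_cast hc3)

theorem lci_gr_antimono (a b c d : ℕ) (ha : 0 < a) (hb : 0 < b) (hc : 0 < c)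
    (hd : 2 ≤ d)
    (hexc : ¬((c = 1 ∧ d = 2) ∨ (c = 1 ∧ d = 3) ∨ (c = 2 ∧ d = 2))) :
    Real.exp (Real.log ((a * ((c : ℝ) + d)) / (((c : ℝ) + 1) * ((a : ℝ) + b))) -
        1.96 * Real.sqrt (1 / a - 1 / ((a : ℝ) + b) + 1 / ((c : ℝ) + 1) - 1 / ((c : ℝ) + d))) <
      Real.exp (Real.log ((a * ((c : ℝ) + d)) / ((c : ℝ) * ((a : ℝ) + b))) -
        1.96 * Real.sqrt (1 / a - 1 / ((a : ℝ) + b) + 1 / (c : ℝ) - 1 / ((c : ℝ) + d))) := by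
  obtain ⟨d₀, hd₀, hd₀d, hgap⟩ := exists_le_gap_le_log c d hc hd hexc
  have hcR : (0 : ℝ) < c := by exact_mod_cast hc
  have hd₀R : (1 : ℝ) ≤ d₀ := by exact_mod_cast hd₀
  have hcase_pos : 0 < 1 / (a : ℝ) - 1 / (a + b) := by
    have : (a : ℝ) < a + b := by simp [hb]
    exact sub_pos.2 (one_div_lt_one_div_of_lt (by positivity) this)
  have hcontrol_nonneg : 0 ≤ 1 / ((c : ℝ) + d₀) - 1 / (c + d) :=
    sub_nonneg.2 (one_div_le_one_div_of_le (by positivity) (by gcongr))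
  set e := 1 / (a : ℝ) - 1 / (a + b) + (1 / ((c : ℝ) + d₀) - 1 / (c + d))
  have hsqrt := sqrt_add_sub_sqrt_add_lt
    (x := 1 / (c : ℝ) - 1 / (c + d₀)) (y := 1 / ((c : ℝ) + 1) - 1 / (c + d₀)) (e := e)
    (sub_nonneg.2 (one_div_le_one_div_of_le (by positivity) (by linarith)))
    (by gcongr; linarith) (by linarith)
  have hlog : log (a * ((c : ℝ) + d) / (c * (a + b)))
      = log (a * ((c : ℝ) + d) / ((c + 1) * (a + b))) + log ((c + 1) / c) := by
    rw [← log_mul (by positivity) (by positivity)]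
    congr 1
    field_simp
  rw [exp_lt_exp, hlog,
    show 1 / (a : ℝ) - 1 / (a + b) + 1 / c - 1 / (c + d) = 1 / c - 1 / (c + d₀) + e by ring,
    show 1 / (a : ℝ) - 1 / (a + b) + 1 / (c + 1) - 1 / (c + d) = 1 / (c + 1) - 1 / (c + d₀) + e by
      ring]
  linarith
end

section
/- Let α > 0 be a real number and let c, d be integers with c ≥ 1 and 2 ≤ d ≤ c+1. Then ln( (d·(c+1)) / (c·(d−1)) ) + 1.96·( √(α + 1/(c+1) + 1/(d−1)) − √(α + 1/c + 1/d) ) > 0. -/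
theorem lci_ors_diff_pos_case1 (α : ℝ) (hα : α > 0) (c d : ℤ)
    (hc : 1 ≤ c) (hd2 : 2 ≤ d) (hdc : d ≤ c + 1) :
    Real.log (((d : ℝ) * ((c : ℝ) + 1)) / ((c : ℝ) * ((d : ℝ) - 1))) +
      1.96 * (Real.sqrt (α + 1 / ((c : ℝ) + 1) + 1 / ((d : ℝ) - 1)) -
        Real.sqrt (α + 1 / (c : ℝ) + 1 / (d : ℝ))) > 0 := by
  have hc' : (1:ℝ) ≤ (c:ℝ) := by exact_mod_cast hc
  have hd' : (2:ℝ) ≤ (d:ℝ) := by exact_mod_cast hd2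
  have hdc' : (d:ℝ) ≤ (c:ℝ) + 1 := by exact_mod_cast hdc
  have hcpos : (0:ℝ) < c := by linarith
  have hd1pos : (0:ℝ) < (d:ℝ) - 1 := by linarith
  have hdpos : (0:ℝ) < (d:ℝ) := by linarith
  have hlog : 0 < Real.log (((d : ℝ) * ((c : ℝ) + 1)) / ((c : ℝ) * ((d : ℝ) - 1))) := by
    apply Real.log_pos
    rw [lt_div_iff₀ (by positivity)]
    nlinarith
  have hsqrt : Real.sqrt (α + 1 / (c : ℝ) + 1 / (d : ℝ)) ≤
      Real.sqrt (α + 1 / ((c : ℝ) + 1) + 1 / ((d : ℝ) - 1)) := by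
    apply Real.sqrt_le_sqrt
    have h1 : 1 / (c:ℝ) + 1 / (d:ℝ) ≤ 1 / ((c:ℝ) + 1) + 1 / ((d:ℝ) - 1) := by
      rw [div_add_div _ _ (ne_of_gt hcpos) (ne_of_gt hdpos),
        div_add_div _ _ (by positivity) (ne_of_gt hd1pos),
        div_le_div_iff₀ (by positivity) (by positivity)]
      nlinarith
    linarith
  nlinarith [hsqrt, hlog]
end

section
/- Let α be a real number with 0 < α ≤ 2, and let c, d be integers with c ≥ 1 and d ≥ c+2. Then ln( (d·(c+1)) / (c·(d−1)) ) − 1.96·( 1/(c·(c+1)) − 1/(d·(d−1)) ) / ( √(α + 1/(c+1) + 1/(d−1)) + √(α + 1/c + 1/d) ) ≥ ln(1 + 1/c) − 2·( 1/(c·(c+1)) ) / ( √(1/(c+1)) + √(1/c) ). -/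
theorem lci_ors_diff_lower_bound (α : ℝ) (hα0 : 0 < α) (hα2 : α ≤ 2)
    (c d : ℤ) (hc : 1 ≤ c) (hd : c + 2 ≤ d) :
    Real.log (((d : ℝ) * ((c : ℝ) + 1)) / ((c : ℝ) * ((d : ℝ) - 1))) -
        1.96 * (1 / ((c : ℝ) * ((c : ℝ) + 1)) - 1 / ((d : ℝ) * ((d : ℝ) - 1))) /
          (Real.sqrt (α + 1 / ((c : ℝ) + 1) + 1 / ((d : ℝ) - 1)) +
            Real.sqrt (α + 1 / (c : ℝ) + 1 / (d : ℝ))) ≥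
      Real.log (1 + 1 / (c : ℝ)) -
        2 * (1 / ((c : ℝ) * ((c : ℝ) + 1))) /
          (Real.sqrt (1 / ((c : ℝ) + 1)) + Real.sqrt (1 / (c : ℝ))) := by
  have hC : (1:ℝ) ≤ (c:ℝ) := by exact_mod_cast hc
  have hD : (c:ℝ) + 2 ≤ (d:ℝ) := by exact_mod_cast hd
  have hC0 : (0:ℝ) < (c:ℝ) := by linarith
  have hD0 : (0:ℝ) < (d:ℝ) := by linarith
  have hD1 : (0:ℝ) < (d:ℝ) - 1 := by linarith
  -- log part
  have hlog : Real.log (1 + 1 / (c:ℝ)) ≤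
      Real.log (((d:ℝ) * ((c:ℝ) + 1)) / ((c:ℝ) * ((d:ℝ) - 1))) := by
    apply Real.log_le_log (by positivity)
    rw [le_div_iff₀ (by positivity : (0:ℝ) < (c:ℝ) * ((d:ℝ) - 1))]
    have he : (1 + 1/(c:ℝ)) * ((c:ℝ) * ((d:ℝ) - 1)) = ((c:ℝ)+1) * ((d:ℝ)-1) := by
      field_simp
    rw [he]; nlinarith
  -- sqrt part
  have hS1 : Real.sqrt (1 / ((c:ℝ) + 1)) ≤
      Real.sqrt (α + 1 / ((c:ℝ) + 1) + 1 / ((d:ℝ) - 1)) := by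
    apply Real.sqrt_le_sqrt
    have : (0:ℝ) < 1 / ((d:ℝ) - 1) := by positivity
    linarith
  have hS2 : Real.sqrt (1 / (c:ℝ)) ≤ Real.sqrt (α + 1 / (c:ℝ) + 1 / (d:ℝ)) := by
    apply Real.sqrt_le_sqrt
    have : (0:ℝ) < 1 / (d:ℝ) := by positivity
    linarith
  have hS'pos : (0:ℝ) < Real.sqrt (1 / ((c:ℝ) + 1)) + Real.sqrt (1 / (c:ℝ)) := by
    have : (0:ℝ) < Real.sqrt (1 / (c:ℝ)) := Real.sqrt_pos.mpr (by positivity)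
    have h2 : (0:ℝ) ≤ Real.sqrt (1 / ((c:ℝ) + 1)) := Real.sqrt_nonneg _
    linarith
  have hnum : 1.96 * (1 / ((c:ℝ) * ((c:ℝ) + 1)) - 1 / ((d:ℝ) * ((d:ℝ) - 1))) ≤
      2 * (1 / ((c:ℝ) * ((c:ℝ) + 1))) := by
    have hy : (0:ℝ) < 1 / ((d:ℝ) * ((d:ℝ) - 1)) := by positivity
    have hx : (0:ℝ) < 1 / ((c:ℝ) * ((c:ℝ) + 1)) := by positivity
    nlinarith
  have hfrac : 1.96 * (1 / ((c:ℝ) * ((c:ℝ) + 1)) - 1 / ((d:ℝ) * ((d:ℝ) - 1))) /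
      (Real.sqrt (α + 1 / ((c:ℝ) + 1) + 1 / ((d:ℝ) - 1)) +
        Real.sqrt (α + 1 / (c:ℝ) + 1 / (d:ℝ))) ≤
      2 * (1 / ((c:ℝ) * ((c:ℝ) + 1))) /
      (Real.sqrt (1 / ((c:ℝ) + 1)) + Real.sqrt (1 / (c:ℝ))) := by
    apply div_le_div₀ (by positivity) hnum hS'pos (by linarith)
  linarith
end

section
/- For every real number x ≥ 4, ln(1 + 1/x) − 1/(x·√x) ≥ 0. -/
/-! Since `√x ≥ 2` for `x ≥ 4`, we have `x √x ≥ 2x ≥ x + 1`, while `log (1 + 1/x) ≥ 1/(x + 1)`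
by `log y ≥ 1 - 1/y` at `y = 1 + 1/x`. Hence `1/(x √x) ≤ 1/(x + 1) ≤ log (1 + 1/x)`. -/

open Real

lemma one_div_add_one_le_log_one_add_one_div {x : ℝ} (hx : 0 < x) :
    1 / (x + 1) ≤ log (1 + 1 / x) := by
  have hy : 0 < 1 + 1 / x := by positivity
  calc 1 / (x + 1) = 1 - (1 + 1 / x)⁻¹ := by field_simp; ring
    _ ≤ log (1 + 1 / x) := one_sub_inv_le_log_of_pos hy

lemma add_one_le_mul_sqrt {x : ℝ} (hx : 4 ≤ x) : x + 1 ≤ x * √x := by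
  have hsqrt : 2 ≤ √x := by
    rw [show (2 : ℝ) = √4 by rw [show (4 : ℝ) = 2 ^ 2 by norm_num, sqrt_sq zero_le_two]]
    exact sqrt_le_sqrt hx
  nlinarith

theorem f_nonneg (x : ℝ) (hx : x ≥ 4) :
    Real.log (1 + 1 / x) - 1 / (x * Real.sqrt x) ≥ 0 := by
  have hx0 : 0 < x := by linarith
  refine sub_nonneg.mpr ?_
  calc 1 / (x * √x) ≤ 1 / (x + 1) :=
      one_div_le_one_div_of_le (by positivity) (add_one_le_mul_sqrt hx)
    _ ≤ log (1 + 1 / x) := one_div_add_one_le_log_one_add_one_div hx0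
end

section
/- Let β = 1.96/(1 + √2). For every real number x ≥ 9, ln(1 + 1/x) − (β/x)·√(1 + 1/x) ≥ 0. -/
/-! With `t = 1/x ∈ (0, 1/9]`, the elementary bound `log (1 + t) ≥ t / (1 + t)` reduces the claim
to `β (1 + t)^{3/2} ≤ 1`, and `β (10/9)^{3/2} ≈ 0.95`. -/

open Real

lemma div_one_add_le_log_one_add {t : ℝ} (ht : 0 < 1 + t) : t / (1 + t) ≤ log (1 + t) :=
  calc t / (1 + t) = 1 - (1 + t)⁻¹ := by field_simp; ring
    _ ≤ log (1 + t) := one_sub_inv_le_log_of_pos ht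

lemma mul_mul_sqrt_one_add_le_log_one_add {b t : ℝ} (ht : 0 ≤ t)
    (hb : b * (1 + t) * √(1 + t) ≤ 1) : b * t * √(1 + t) ≤ log (1 + t) := by
  have h1t : 0 < 1 + t := by linarith
  calc b * t * √(1 + t) = t * (b * (1 + t) * √(1 + t)) / (1 + t) := by field_simp
    _ ≤ t * 1 / (1 + t) := by gcongr
    _ = t / (1 + t) := by rw [mul_one]
    _ ≤ log (1 + t) := div_one_add_le_log_one_add h1t

lemma one_nine_six_div_one_add_sqrt_two_le : 1.96 / (1 + √2) ≤ 0.82 := by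
  have h : (1.41 : ℝ) < √2 := lt_sqrt_of_sq_lt (by norm_num)
  rw [div_le_iff₀ (by positivity)]
  linarith

theorem f_gr_nonneg (x : ℝ) (hx : x ≥ 9) :
    Real.log (1 + 1 / x) -
      (1.96 / (1 + Real.sqrt 2) / x) * Real.sqrt (1 + 1 / x) ≥ 0 := by
  have ht : 1 / x ≤ 1 / 9 := one_div_le_one_div_of_le (by norm_num) hx
  have hsqrt : √(1 + 1 / x) ≤ 1.06 := by
    rw [sqrt_le_left (by norm_num)]
    linarith
  have hb : 1.96 / (1 + √2) * (1 + 1 / x) * √(1 + 1 / x) ≤ 1 :=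
    calc 1.96 / (1 + √2) * (1 + 1 / x) * √(1 + 1 / x) ≤ 0.82 * (1 + 1 / 9) * 1.06 := by
          gcongr
          exact one_nine_six_div_one_add_sqrt_two_le
      _ ≤ 1 := by norm_num
  have key := mul_mul_sqrt_one_add_le_log_one_add (by positivity) hb
  rw [div_eq_mul_one_div (1.96 / (1 + √2)) x]
  linarith
end

section
/- Let β = 1.96/(1 + √2). For all real numbers x, y with 9 ≤ x ≤ y, ln(1 + 1/y) − (β/y)·√(1 + 1/y) ≤ ln(1 + 1/x) − (β/x)·√(1 + 1/x). (The function f(x) = ln(1 + 1/x) − (β/x)√(1 + 1/x) is decreasing on [9, ∞).) -/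
open Real Set

noncomputable def myβ : ℝ := 1.96 / (1 + Real.sqrt 2)

lemma myβ_pos : 0 < myβ := by
  unfold myβ
  have : (0:ℝ) ≤ Real.sqrt 2 := Real.sqrt_nonneg 2
  positivity

lemma key_bound {s : ℝ} (hs1 : 1 ≤ s) (hs2 : s^2 ≤ 10/9) :
    myβ * (3 * s^2 - 1) * s ≤ 2 := by
  have ha : Real.sqrt 2 ^ 2 = 2 := Real.sq_sqrt (by norm_num)
  have ha0 : (0:ℝ) ≤ Real.sqrt 2 := Real.sqrt_nonneg 2
  have ha1 : (1.414213:ℝ) ≤ Real.sqrt 2 := by nlinarith [sq_nonneg (Real.sqrt 2 - 1.414213)]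
  have hβ : myβ ≤ 1.96 / 2.414213 := by
    unfold myβ
    apply div_le_div_of_nonneg_left (by norm_num) (by norm_num) (by linarith)
  have hs0 : 0 < s := lt_of_lt_of_le one_pos hs1
  have hsu : s ≤ 3.162278 / 3 := by nlinarith
  have h1 : (3 * s^2 - 1) * s ≤ (7/3) * (3.162278/3) := by
    have h2 : 3 * s^2 - 1 ≤ 7/3 := by nlinarith
    have h3 : 0 ≤ 3 * s^2 - 1 := by nlinarith
    calc (3 * s^2 - 1) * s ≤ (7/3) * s := by nlinarith
      _ ≤ (7/3) * (3.162278/3) := by nlinarith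
  calc myβ * (3 * s^2 - 1) * s ≤ (1.96/2.414213) * ((7/3) * (3.162278/3)) := by
        have := myβ_pos
        nlinarith [mul_nonneg (le_of_lt myβ_pos) (by nlinarith : (0:ℝ) ≤ (3*s^2-1)*s)]
    _ ≤ 2 := by norm_num

noncomputable def h (t : ℝ) : ℝ := Real.log (1 + t) - myβ * (t * Real.sqrt (1 + t))

lemma h_hasDeriv {t : ℝ} (ht : 0 < t) :
    HasDerivAt h (1 / (1 + t) - myβ * (1 * Real.sqrt (1 + t) + t * (1 / (2 * Real.sqrt (1 + t))))) t := by
  have hpos : (0:ℝ) < 1 + t := by linarith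
  have h1 : HasDerivAt (fun s : ℝ => 1 + s) 1 t := (hasDerivAt_id t).const_add 1
  have hlog : HasDerivAt (fun s : ℝ => Real.log (1 + s)) (1 / (1 + t)) t :=
    h1.log (ne_of_gt hpos)
  have hsqrt : HasDerivAt (fun s : ℝ => Real.sqrt (1 + s)) (1 / (2 * Real.sqrt (1 + t))) t := by
    have := h1.sqrt (ne_of_gt hpos)
    simpa using this
  have hmul : HasDerivAt (fun s : ℝ => s * Real.sqrt (1 + s))
      (1 * Real.sqrt (1 + t) + t * (1 / (2 * Real.sqrt (1 + t)))) t :=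
    (hasDerivAt_id t).mul hsqrt
  exact hlog.sub (hmul.const_mul myβ)

lemma h_mono : MonotoneOn h (Icc 0 (1/9 : ℝ)) := by
  apply monotoneOn_of_deriv_nonneg (convex_Icc _ _)
  · -- continuity
    apply ContinuousOn.sub
    · apply ContinuousOn.log (by fun_prop)
      intro t ht
      have := ht.1
      simp only [Set.mem_Icc] at ht
      nlinarith [ht.1]
    · fun_prop
  · intro t ht
    rw [interior_Icc] at ht
    exact (h_hasDeriv ht.1).differentiableAt.differentiableWithinAt
  · intro t ht
    rw [interior_Icc] at ht
    rw [(h_hasDeriv ht.1).deriv]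
    set s := Real.sqrt (1 + t) with hs
    have hpos : (0:ℝ) < 1 + t := by linarith [ht.1]
    have hs2 : s^2 = 1 + t := Real.sq_sqrt (le_of_lt hpos)
    have hsn : 0 ≤ s := Real.sqrt_nonneg _
    have hs1 : 1 ≤ s := by nlinarith [ht.1]
    have hsb : s^2 ≤ 10/9 := by rw [hs2]; linarith [ht.2]
    have hkey := key_bound hs1 hsb
    have hs0 : 0 < s := lt_of_lt_of_le one_pos hs1
    rw [sub_nonneg]
    have ht' : t = s^2 - 1 := by linarith
    have heq : myβ * (1 * s + t * (1 / (2 * s))) = myβ * (3 * s^2 - 1) / (2 * s) := by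
      rw [ht']
      field_simp
      ring_nf
    rw [heq, ← hs2]
    rw [div_le_div_iff₀ (by positivity) (by positivity)]
    calc myβ * (3 * s^2 - 1) * s^2 = (myβ * (3 * s^2 - 1) * s) * s := by ring
      _ ≤ 2 * s := by
          apply mul_le_mul_of_nonneg_right hkey (le_of_lt hs0)
      _ = 1 * (2 * s) := by ring

theorem f_gr_decreasing (x y : ℝ) (hx : 9 ≤ x) (hxy : x ≤ y) :
    Real.log (1 + 1 / y) -
        (1.96 / (1 + Real.sqrt 2) / y) * Real.sqrt (1 + 1 / y) ≤
      Real.log (1 + 1 / x) -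
        (1.96 / (1 + Real.sqrt 2) / x) * Real.sqrt (1 + 1 / x) := by
  have hx0 : 0 < x := by linarith
  have hy0 : 0 < y := by linarith
  have hmemx : (1/x) ∈ Icc (0:ℝ) (1/9) := by
    constructor
    · positivity
    · rw [div_le_div_iff₀ hx0 (by norm_num)]; linarith
  have hmemy : (1/y) ∈ Icc (0:ℝ) (1/9) := by
    constructor
    · positivity
    · rw [div_le_div_iff₀ hy0 (by norm_num)]; linarith
  have hle : (1/y : ℝ) ≤ 1/x := by
    apply div_le_div_of_nonneg_left (by norm_num) hx0 hxy
  have := h_mono hmemy hmemx hle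
  unfold h myβ at this
  have e1 : 1.96 / (1 + Real.sqrt 2) / y * Real.sqrt (1 + 1/y)
      = 1.96 / (1 + Real.sqrt 2) * (1/y * Real.sqrt (1 + 1/y)) := by ring
  have e2 : 1.96 / (1 + Real.sqrt 2) / x * Real.sqrt (1 + 1/x)
      = 1.96 / (1 + Real.sqrt 2) * (1/x * Real.sqrt (1 + 1/x)) := by ring
  rw [e1, e2]
  exact this
end
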